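/- arXiv:2512.18416 — 2 statements merged into one kernel-verified Lean document; each statement's English description precedes it below -/
import Mathlib

section
/- Let G be a finite simple graph with vertex enumeration x_1, …, x_n, let λ be a positive real, and let C > 0 be a real constant. Assume that for every i, the vertex x_i has at most 2λ neighbors among {x_j : j > i}, and that the total number of edges of G is at most λ·n. Define T recursively by T(x_i) := (2/(5λ)) · Σ_{j < i, x_j ~ x_i} T(x_j) + 10·C·deg(x_i)/λ, where the sum is over neighbors x_j of x_i with j < i. Then Σ_{i=1}^{n} T(x_i) ≤ (50C/λ) · Σ_{i=1}^{n} deg(x_i) ≤ 100·C·n. -/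
/-!
Summing the recursion over all vertices, each `T(x_j)` reappears once for every later neighbour
of `x_j`, i.e. at most `2λ` times, so `Σ T ≤ (2/(5λ)) · 2λ · Σ T + (10C/λ) Σ deg`. Since `T ≥ 0`
(induction along the enumeration), the term `(4/5) Σ T` can be absorbed, giving
`Σ T ≤ (50C/λ) Σ deg`; the handshake lemma and `|E| ≤ λ n` give the second bound.
-/

open Finset

theorem nonneg_of_eq_mul_sum_add {ι R : Type*} [Preorder ι] [WellFoundedLT ι]
    [Semiring R] [PartialOrder R] [IsOrderedRing R]
    {s : ι → Finset ι} (hs : ∀ i, ∀ j ∈ s i, j < i) {T b : ι → R} {a : R}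
    (ha : 0 ≤ a) (hb : 0 ≤ b) (hT : ∀ i, T i = a * ∑ j ∈ s i, T j + b i) : 0 ≤ T := by
  intro i
  induction i using WellFoundedLT.induction with
  | ind i ih =>
    rw [hT i]
    have hsum : 0 ≤ ∑ j ∈ s i, T j := sum_nonneg fun j hj => ih j (hs i j hj)
    exact add_nonneg (mul_nonneg ha hsum) (hb i)

theorem sum_sum_filter_eq_sum_card_nsmul {ι M : Type*} [Fintype ι] [AddCommMonoid M]
    (r : ι → ι → Prop) [DecidableRel r] (f : ι → M) :
    ∑ i, ∑ j ∈ univ.filter (fun j => r j i), f j = ∑ j, #(univ.filter (r j)) • f j := by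
  simp_rw [sum_filter]
  rw [sum_comm]
  refine sum_congr rfl fun j _ => ?_
  rw [← sum_filter, sum_const]

theorem sum_sum_filter_le_mul_sum {ι R : Type*} [Fintype ι]
    [Semiring R] [PartialOrder R] [IsOrderedRing R]
    (r : ι → ι → Prop) [DecidableRel r] {f : ι → R} (hf : 0 ≤ f) {K : R}
    (hr : ∀ j, (#(univ.filter (r j)) : R) ≤ K) :
    ∑ i, ∑ j ∈ univ.filter (fun j => r j i), f j ≤ K * ∑ j, f j := by
  rw [sum_sum_filter_eq_sum_card_nsmul, mul_sum]
  gcongr with j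
  rw [nsmul_eq_mul]
  exact mul_le_mul_of_nonneg_right (hr j) (hf j)

theorem SimpleGraph.sum_degree_equiv_eq_twice_card_edges {V ι : Type*} [Fintype V] [Fintype ι]
    (G : SimpleGraph V) [DecidableRel G.Adj] (x : ι ≃ V) :
    ∑ i, G.degree (x i) = 2 * #G.edgeFinset :=
  (x.sum_comp fun v => G.degree v).trans G.sum_degrees_eq_twice_card_edges

theorem stmt4_general {V : Type*} [Fintype V] (G : SimpleGraph V)
    [DecidableRel G.Adj] (n : ℕ) (x : Fin n ≃ V) (lam C : ℝ) (hlam : 0 < lam) (hC : 0 < C)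
    (hdeg : ∀ i : Fin n,
      ((Finset.univ.filter (fun j : Fin n => i < j ∧ G.Adj (x i) (x j))).card : ℝ) ≤ 2 * lam)
    (hedges : (G.edgeFinset.card : ℝ) ≤ lam * n)
    (T : Fin n → ℝ)
    (hT : ∀ i : Fin n, T i =
      (2 / (5 * lam)) *
        (∑ j ∈ Finset.univ.filter (fun j : Fin n => j < i ∧ G.Adj (x j) (x i)), T j)
      + 10 * C * (G.degree (x i)) / lam) :
    (∑ i, T i) ≤ (50 * C / lam) * ∑ i, (G.degree (x i) : ℝ) ∧
    (50 * C / lam) * (∑ i, (G.degree (x i) : ℝ)) ≤ 100 * C * n := by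
  have hT_nonneg : 0 ≤ T :=
    nonneg_of_eq_mul_sum_add (fun i j hj => (mem_filter.1 hj).2.1) (by positivity)
      (fun i => by positivity) hT
  have hback := sum_sum_filter_le_mul_sum (fun j i => j < i ∧ G.Adj (x j) (x i)) hT_nonneg hdeg
  have hsum : ∑ i, T i = (2 / (5 * lam)) *
      ∑ i, ∑ j ∈ univ.filter (fun j => j < i ∧ G.Adj (x j) (x i)), T j
      + 10 * C / lam * ∑ i, (G.degree (x i) : ℝ) := by
    rw [sum_congr rfl fun i _ => hT i, sum_add_distrib, mul_sum, mul_sum]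
    congr 1
    exact sum_congr rfl fun i _ => by ring
  have hdegsum : ∑ i, (G.degree (x i) : ℝ) = 2 * #G.edgeFinset := by
    exact_mod_cast G.sum_degree_equiv_eq_twice_card_edges x
  have habsorb : 2 / (5 * lam) * (2 * lam * ∑ i, T i) = 4 / 5 * ∑ i, T i := by
    field_simp; ring
  constructor
  · have := mul_le_mul_of_nonneg_left hback (by positivity : (0 : ℝ) ≤ 2 / (5 * lam))
    have h50 : 50 * C / lam = 5 * (10 * C / lam) := by ring
    rw [h50]
    linarith
  · rw [hdegsum]
    calc 50 * C / lam * (2 * #G.edgeFinset) ≤ 50 * C / lam * (2 * (lam * n)) := by gcongr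
      _ = 100 * C * n := by field_simp; ring

/-- Suppose each vertex `x_i` has at most `2λ` neighbors among `{x_j : j > i}` and the total
number of edges is at most `λ·n`. Define `T` recursively by
`T(x_i) = (2/(5λ)) · Σ_{j < i, x_j ~ x_i} T(x_j) + 10·C·deg(x_i)/λ`.
Then `Σ_i T(x_i) ≤ (50C/λ) · Σ_i deg(x_i) ≤ 100·C·n`. -/
theorem stmt4 {V : Type*} [Fintype V] [DecidableEq V] (G : SimpleGraph V)
    [DecidableRel G.Adj] (n : ℕ) (x : Fin n ≃ V) (lam C : ℝ) (hlam : 0 < lam) (hC : 0 < C)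
    (hdeg : ∀ i : Fin n,
      ((Finset.univ.filter (fun j : Fin n => i < j ∧ G.Adj (x i) (x j))).card : ℝ) ≤ 2 * lam)
    (hedges : (G.edgeFinset.card : ℝ) ≤ lam * n)
    (T : Fin n → ℝ)
    (hT : ∀ i : Fin n, T i =
      (2 / (5 * lam)) *
        (∑ j ∈ Finset.univ.filter (fun j : Fin n => j < i ∧ G.Adj (x j) (x i)), T j)
      + 10 * C * (G.degree (x i)) / lam) :
    (∑ i, T i) ≤ (50 * C / lam) * ∑ i, (G.degree (x i) : ℝ) ∧
    (50 * C / lam) * (∑ i, (G.degree (x i) : ℝ)) ≤ 100 * C * n :=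
  stmt4_general G n x lam C hlam hC hdeg hedges T hT
end

section
/- Let G be a finite simple graph with vertex enumeration x_1, …, x_n, let λ > 0 and C > 0 be reals, and define T recursively by T(x_i) := (2/(5λ)) · Σ_{j < i, x_j ~ x_i} T(x_j) + 10·C·deg(x_i)/λ. For k ≥ 1, let z_{k,i} denote the number of k-node directed paths starting at x_i, i.e., sequences of indices i = p_1 < p_2 < ⋯ < p_k with x_{p_l} adjacent to x_{p_{l+1}} for every 1 ≤ l < k (so z_{1,i} = 1, and z_{k,i} = 0 for k > n). Then Σ_{i=1}^{n} T(x_i) = Σ_{i=1}^{n} (10·C·deg(x_i)/λ) · ( Σ_{k=1}^{n} z_{k,i} · (2/(5λ))^{k−1} ). -/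
/-!
Write `q = 2/(5λ)`, `b_i = 10·C·deg(x_i)/λ`, and let `A` be the adjacency matrix restricted to
pairs `j < i`. The recursion says `T = b + q A T`. The path weights
`W_i = Σ_k z_{k,i} q^(k-1)` satisfy the transposed recursion `W = 1 + q Aᵀ W`, since a directed
path from `x_i` is `x_i` followed by a directed path from a later neighbour of `x_i`. Hence
`Σ T = ⟨T, W - q Aᵀ W⟩ = ⟨T - q A T, W⟩ = ⟨b, W⟩`.
-/

/- `pathCount G x k i` is the number of `(k+1)`-node directed paths starting at `x_i`:
strictly increasing sequences of indices `i = p_0 < p_1 < ⋯ < p_k` with `x_{p_l}`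
adjacent to `x_{p_{l+1}}` for all `l`. So the quantity `z_{k,i}` of the paper
(number of `k`-node directed paths, `k ≥ 1`) is `pathCount G x (k-1) i`,
and `pathCount G x 0 i = 1`. In particular in the sum below, `k` ranging over
`Finset.range n` corresponds to the paper's `k` ranging over `1, …, n`. -/
open Classical in
noncomputable def pathCount {V : Type*} [Fintype V] (G : SimpleGraph V) {n : ℕ}
    (x : Fin n ≃ V) (k : ℕ) (i : Fin n) : ℕ :=
  (Finset.univ.filter (fun p : Fin (k + 1) → Fin n =>
    StrictMono p ∧ p 0 = i ∧
      ∀ l : Fin k, G.Adj (x (p l.castSucc)) (x (p l.succ)))).card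

open Finset

theorem sum_eq_sum_mul_of_dual_recursions {ι R : Type*} [Fintype ι] [CommRing R]
    (r : ι → ι → Prop) [DecidableRel r] (q : R) (b T W : ι → R)
    (hT : ∀ i, T i = q * ∑ j with r j i, T j + b i)
    (hW : ∀ i, W i = 1 + q * ∑ j with r i j, W j) :
    ∑ i, T i = ∑ i, b i * W i := by
  have hswap : ∑ i, (∑ j with r j i, T j) * W i = ∑ j, T j * ∑ i with r j i, W i := by
    simp only [sum_mul, mul_sum, sum_filter]
    rw [sum_comm]
    refine sum_congr rfl fun j _ => sum_congr rfl fun i _ => ?_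
    split_ifs <;> ring
  calc ∑ i, T i = ∑ i, T i * (W i - q * ∑ j with r i j, W j) :=
        sum_congr rfl fun i _ => by rw [hW i]; ring
    _ = ∑ i, T i * W i - q * ∑ i, (∑ j with r j i, T j) * W i := by
        rw [hswap, mul_sum, ← sum_sub_distrib]
        exact sum_congr rfl fun i _ => by ring
    _ = ∑ i, b i * W i := by
        rw [mul_sum, ← sum_sub_distrib]
        exact sum_congr rfl fun i _ => by rw [hT i]; ring

section pathCount

variable {V : Type*} [Fintype V] (G : SimpleGraph V) {n : ℕ} (x : Fin n ≃ V)

theorem pathCount_zero (i : Fin n) : pathCount G x 0 i = 1 := by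
  rw [pathCount, card_eq_one]
  refine ⟨fun _ => i, ?_⟩
  ext p
  simp [Fin.forall_fin_one, funext_iff, Subsingleton.strictMono]

theorem pathCount_eq_zero_of_le {k : ℕ} (hk : n ≤ k) (i : Fin n) : pathCount G x k i = 0 := by
  classical
  rw [pathCount, card_eq_zero, filter_eq_empty_iff]
  rintro p - ⟨hp, -⟩
  have := Fintype.card_le_of_injective p hp.injective
  simp only [Fintype.card_fin] at this
  omega

theorem pathCount_succ [DecidableRel G.Adj] (k : ℕ) (i : Fin n) :
    pathCount G x (k + 1) i = ∑ j with i < j ∧ G.Adj (x i) (x j), pathCount G x k j := by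
  simp only [pathCount]
  rw [← card_sigma]
  refine card_nbij' (fun p => ⟨p 1, Fin.tail p⟩) (fun s => Fin.cons i s.2) ?_ ?_ ?_ ?_ <;>
    simp only [Set.MapsTo, Set.LeftInvOn, coe_filter, coe_sigma, mem_univ, true_and,
      Set.mem_ofPred_eq, Set.mem_sigma_iff]
  · rintro p ⟨hp, rfl, hadj⟩
    refine ⟨⟨hp Fin.zero_lt_one, by simpa using hadj 0⟩, hp.comp Fin.strictMono_succ,
      by simp [Fin.tail], fun l => ?_⟩
    simpa [Fin.tail, ← Fin.succ_castSucc] using hadj l.succ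
  · rintro ⟨j, q⟩ ⟨⟨hij, hij'⟩, hq, hq0, hadj⟩
    dsimp only at *
    subst hq0
    refine ⟨Fin.strictMono_cons.2 ⟨fun l => hij.trans_le (hq.monotone (Fin.zero_le l)), hq⟩,
      rfl, ?_⟩
    refine Fin.forall_fin_succ.2 ⟨by simpa using hij', fun l => ?_⟩
    simpa [← Fin.succ_castSucc] using hadj l
  · rintro p ⟨-, rfl, -⟩
    exact Fin.cons_self_tail p
  · rintro ⟨j, q⟩ ⟨-, -, hq0, -⟩
    simpa using hq0

noncomputable def pathWeight {R : Type*} [Semiring R] (q : R) (i : Fin n) : R :=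
  ∑ k ∈ range n, (pathCount G x k i : R) * q ^ k

theorem pathWeight_eq [DecidableRel G.Adj] {R : Type*} [CommSemiring R] (q : R) (i : Fin n) :
    pathWeight G x q i = 1 + q * ∑ j with i < j ∧ G.Adj (x i) (x j), pathWeight G x q j := by
  -- no directed path has more than `n` nodes, so the term `k = n` vanishes
  calc pathWeight G x q i = ∑ k ∈ range (n + 1), (pathCount G x k i : R) * q ^ k := by
        rw [sum_range_succ, pathCount_eq_zero_of_le G x le_rfl, Nat.cast_zero, zero_mul, add_zero,
          pathWeight]
    _ = 1 + ∑ k ∈ range n, (pathCount G x (k + 1) i : R) * q ^ (k + 1) := by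
        rw [sum_range_succ', pathCount_zero, add_comm, Nat.cast_one, pow_zero, one_mul]
    _ = 1 + q * ∑ j with i < j ∧ G.Adj (x i) (x j), pathWeight G x q j := by
        simp only [pathCount_succ, pathWeight, Nat.cast_sum, sum_mul, mul_sum]
        rw [sum_comm]
        exact congrArg _ (sum_congr rfl fun j _ => sum_congr rfl fun k _ => by ring)

end pathCount

theorem stmt6_general {V : Type*} [Fintype V] (G : SimpleGraph V)
    [DecidableRel G.Adj] (n : ℕ) (x : Fin n ≃ V) (lam C : ℝ)
    (T : Fin n → ℝ)
    (hT : ∀ i : Fin n, T i =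
      (2 / (5 * lam)) *
        (∑ j ∈ Finset.univ.filter (fun j : Fin n => j < i ∧ G.Adj (x j) (x i)), T j)
      + 10 * C * (G.degree (x i)) / lam) :
    (∑ i, T i) =
      ∑ i, (10 * C * (G.degree (x i)) / lam) *
        ∑ k ∈ Finset.range n, (pathCount G x k i : ℝ) * (2 / (5 * lam)) ^ k :=
  sum_eq_sum_mul_of_dual_recursions (fun j i => j < i ∧ G.Adj (x j) (x i)) _ _ T
    (pathWeight G x _) hT (pathWeight_eq G x _)

/-- With `T` defined recursively by
`T(x_i) = (2/(5λ)) · Σ_{j < i, x_j ~ x_i} T(x_j) + 10·C·deg(x_i)/λ`, one has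
`Σ_{i=1}^n T(x_i) = Σ_{i=1}^n (10·C·deg(x_i)/λ) · (Σ_{k=1}^n z_{k,i} · (2/(5λ))^{k-1})`. -/
theorem stmt6 {V : Type*} [Fintype V] [DecidableEq V] (G : SimpleGraph V)
    [DecidableRel G.Adj] (n : ℕ) (x : Fin n ≃ V) (lam C : ℝ) (hlam : 0 < lam) (hC : 0 < C)
    (T : Fin n → ℝ)
    (hT : ∀ i : Fin n, T i =
      (2 / (5 * lam)) *
        (∑ j ∈ Finset.univ.filter (fun j : Fin n => j < i ∧ G.Adj (x j) (x i)), T j)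
      + 10 * C * (G.degree (x i)) / lam) :
    (∑ i, T i) =
      ∑ i, (10 * C * (G.degree (x i)) / lam) *
        ∑ k ∈ Finset.range n, (pathCount G x k i : ℝ) * (2 / (5 * lam)) ^ k :=
  stmt6_general G n x lam C T hT
end
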